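/- Let C be a premodel category which also carries a Fresse left semi-model structure with the same cofibrations and fibrations. Then a fibration of C is acyclic (i.e., has the right lifting property against all cofibrations between cofibrant objects) if and only if it is trivial (i.e., a weak equivalence), and a core cofibration is acyclic (has the left lifting property against all fibrations between fibrant objects) if and only if it is a weak equivalence. Moreover every trivial core cofibration is an anodyne cofibration. -/
import Mathlib


open CategoryTheory CategoryTheory.Limits

universe v u

variable {C : Type u} [Category.{v} C]

/-- `f` is a retract of `g` in the arrow category. -/
def IsRetractOf {X Y Z W : C} (f : X ⟶ Y) (g : Z ⟶ W) : Prop :=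
  ∃ (u : X ⟶ Z) (r : Z ⟶ X) (v : Y ⟶ W) (s : W ⟶ Y),
    u ≫ r = 𝟙 X ∧ v ≫ s = 𝟙 Y ∧ u ≫ g = f ≫ v ∧ g ≫ s = r ≫ f

/-- A Fresse left semi-model category: weak equivalences satisfying 2-out-of-3 and, with
cofibrations and fibrations, closed under retracts; factorizations of maps with cofibrant
domain; lifting of core cofibrations against trivial fibrations and of trivial core
cofibrations against fibrations; fibrations stable under pullback; initial object
cofibrant. -/
structure FresseLeft (C : Type u) [Category.{v} C] [HasLimits C] [HasColimits C] where
  W : MorphismProperty C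
  Cof : MorphismProperty C
  Fib : MorphismProperty C
  W_comp : ∀ {X Y Z : C} (f : X ⟶ Y) (g : Y ⟶ Z), W f → W g → W (f ≫ g)
  W_cancel_left : ∀ {X Y Z : C} (f : X ⟶ Y) (g : Y ⟶ Z), W g → W (f ≫ g) → W f
  W_cancel_right : ∀ {X Y Z : C} (f : X ⟶ Y) (g : Y ⟶ Z), W f → W (f ≫ g) → W g
  W_retract : ∀ {X Y X' Y' : C} (f : X ⟶ Y) (f' : X' ⟶ Y'),
    IsRetractOf f f' → W f' → W f
  cof_retract : ∀ {X Y X' Y' : C} (f : X ⟶ Y) (f' : X' ⟶ Y'),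
    IsRetractOf f f' → Cof f' → Cof f
  fib_retract : ∀ {X Y X' Y' : C} (f : X ⟶ Y) (f' : X' ⟶ Y'),
    IsRetractOf f f' → Fib f' → Fib f
  fact_cof_trivFib : ∀ {X Y : C} (f : X ⟶ Y), Cof (initial.to X) →
    ∃ (Z : C) (i : X ⟶ Z) (p : Z ⟶ Y), Cof i ∧ Fib p ∧ W p ∧ i ≫ p = f
  fact_trivCof_fib : ∀ {X Y : C} (f : X ⟶ Y), Cof (initial.to X) →
    ∃ (Z : C) (i : X ⟶ Z) (p : Z ⟶ Y), Cof i ∧ W i ∧ Fib p ∧ i ≫ p = f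
  lift_cof_trivFib : ∀ {A B X Y : C} (i : A ⟶ B) (p : X ⟶ Y),
    Cof i → Cof (initial.to A) → Fib p → W p → HasLiftingProperty i p
  lift_trivCof_fib : ∀ {A B X Y : C} (i : A ⟶ B) (p : X ⟶ Y),
    Cof i → Cof (initial.to A) → W i → Fib p → HasLiftingProperty i p
  fib_pullback : ∀ {P X Y Z : C} (fst : P ⟶ X) (snd : P ⟶ Y) (f : X ⟶ Z) (g : Y ⟶ Z),
    IsPullback fst snd f g → Fib f → Fib snd
  initial_cofibrant : Cof (𝟙 (⊥_ C))

namespace FresseLeft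

variable [HasLimits C] [HasColimits C] (M : FresseLeft C)

/-- Cofibrant objects. -/
def Cofibrant (X : C) : Prop := M.Cof (initial.to X)

/-- Fibrant objects. -/
def Fibrant (X : C) : Prop := M.Fib (terminal.from X)

end FresseLeft

/-- A premodel category structure on a complete and cocomplete category. -/
structure Premodel (C : Type u) [Category.{v} C] [HasLimits C] [HasColimits C] where
  Cof : MorphismProperty C
  AnCof : MorphismProperty C
  Fib : MorphismProperty C
  AnFib : MorphismProperty C
  anCof_le_cof : ∀ {X Y : C} (f : X ⟶ Y), AnCof f → Cof f
  cof_llp : ∀ {X Y A B : C} (f : X ⟶ Y) (g : A ⟶ B), Cof f → AnFib g → HasLiftingProperty f g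
  cof_of_llp : ∀ {X Y : C} (f : X ⟶ Y),
    (∀ {A B : C} (g : A ⟶ B), AnFib g → HasLiftingProperty f g) → Cof f
  anFib_of_rlp : ∀ {X Y : C} (g : X ⟶ Y),
    (∀ {A B : C} (f : A ⟶ B), Cof f → HasLiftingProperty f g) → AnFib g
  fact_cof_anFib : ∀ {X Y : C} (f : X ⟶ Y),
    ∃ (Z : C) (i : X ⟶ Z) (p : Z ⟶ Y), Cof i ∧ AnFib p ∧ i ≫ p = f
  anCof_llp : ∀ {X Y A B : C} (f : X ⟶ Y) (g : A ⟶ B), AnCof f → Fib g → HasLiftingProperty f g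
  anCof_of_llp : ∀ {X Y : C} (f : X ⟶ Y),
    (∀ {A B : C} (g : A ⟶ B), Fib g → HasLiftingProperty f g) → AnCof f
  fib_of_rlp : ∀ {X Y : C} (g : X ⟶ Y),
    (∀ {A B : C} (f : A ⟶ B), AnCof f → HasLiftingProperty f g) → Fib g
  fact_anCof_fib : ∀ {X Y : C} (f : X ⟶ Y),
    ∃ (Z : C) (i : X ⟶ Z) (p : Z ⟶ Y), AnCof i ∧ Fib p ∧ i ≫ p = f

namespace Premodel

variable [HasLimits C] [HasColimits C] (P : Premodel C)

/-- Fibrant objects. -/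
def Fibrant (X : C) : Prop := P.Fib (terminal.from X)

/-- Cofibrant objects. -/
def Cofibrant (X : C) : Prop := P.Cof (initial.to X)

/-- Acyclic cofibrations. -/
def AcyclicCof {X Y : C} (f : X ⟶ Y) : Prop :=
  P.Cof f ∧ ∀ {A B : C} (g : A ⟶ B), P.Fib g → P.Fibrant A → P.Fibrant B →
    HasLiftingProperty f g

/-- Acyclic fibrations. -/
def AcyclicFib {X Y : C} (g : X ⟶ Y) : Prop :=
  P.Fib g ∧ ∀ {A B : C} (f : A ⟶ B), P.Cof f → P.Cofibrant A → P.Cofibrant B →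
    HasLiftingProperty f g

end Premodel

section Aux

variable [HasLimits C] [HasColimits C]

/-- Cofibrations (in the premodel structure) are closed under composition. -/
lemma aux_cof_comp (P : Premodel C) {X Y Z : C} {f : X ⟶ Y} {g : Y ⟶ Z}
    (hf : P.Cof f) (hg : P.Cof g) : P.Cof (f ≫ g) := by
  refine P.cof_of_llp _ ?_
  intro A B h hh
  haveI := P.cof_llp f h hf hh
  haveI := P.cof_llp g h hg hh
  infer_instance

/-- Fibrations (in the premodel structure) are closed under composition. -/
lemma aux_fib_comp (P : Premodel C) {X Y Z : C} {f : X ⟶ Y} {g : Y ⟶ Z}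
    (hf : P.Fib f) (hg : P.Fib g) : P.Fib (f ≫ g) := by
  refine P.fib_of_rlp _ ?_
  intro A B h hh
  haveI := P.anCof_llp h f hh hf
  haveI := P.anCof_llp h g hh hg
  infer_instance

/-- The initial object is cofibrant. -/
lemma aux_bot_cofibrant (M : FresseLeft C) : M.Cof (initial.to (⊥_ C)) := by
  have h : initial.to (⊥_ C) = 𝟙 (⊥_ C) := Subsingleton.elim _ _
  rw [h]; exact M.initial_cofibrant

/-- Cofibrant replacement: every object admits a trivial fibration from a cofibrant
object. -/
lemma aux_cof_replacement (M : FresseLeft C) (X : C) :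
    ∃ (Z : C) (r : Z ⟶ X), M.Cofibrant Z ∧ M.Fib r ∧ M.W r := by
  obtain ⟨Z, i, p, hi, hp, hw, -⟩ := M.fact_cof_trivFib (initial.to X) (aux_bot_cofibrant M)
  refine ⟨Z, p, ?_, hp, hw⟩
  have h : initial.to Z = i := Subsingleton.elim _ _
  show M.Cof (initial.to Z)
  rw [h]; exact hi

/-- An anodyne fibration with cofibrant domain is a weak equivalence. -/
lemma aux_anFib_w (P : Premodel C) (M : FresseLeft C) (hCof : P.Cof = M.Cof)
    {Z Y : C} (q : Z ⟶ Y) (hq : P.AnFib q) (hZ : M.Cofibrant Z) : M.W q := by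
  obtain ⟨T, k, r, hk, hr, hwr, hfac⟩ := M.fact_cof_trivFib q hZ
  haveI : HasLiftingProperty k q := P.cof_llp k q (by rw [hCof]; exact hk) hq
  have sq : CommSq (𝟙 Z) k q r := ⟨by simp [hfac]⟩
  exact M.W_retract q r
    ⟨k, sq.lift, 𝟙 Y, 𝟙 Y, sq.fac_left, by simp, by simp [hfac], by simp [sq.fac_right]⟩ hwr

/-- A map with cofibrant domain having RLP against core cofibrations is a weak
equivalence. -/
lemma aux_rlp_w_of_cofibrant (P : Premodel C) (M : FresseLeft C) (hCof : P.Cof = M.Cof)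
    {X Y : C} (p : X ⟶ Y) (hX : M.Cofibrant X)
    (hrlp : ∀ {A B : C} (g : A ⟶ B), M.Cof g → M.Cofibrant A → M.Cofibrant B →
      HasLiftingProperty g p) : M.W p := by
  obtain ⟨Z, i, q, hi, hq, hfac⟩ := P.fact_cof_anFib p
  have hXP : P.Cof (initial.to X) := by rw [hCof]; exact hX
  have hZ : M.Cofibrant Z := by
    have h1 : P.Cof (initial.to X ≫ i) := aux_cof_comp P hXP hi
    have h2 : initial.to X ≫ i = initial.to Z := Subsingleton.elim _ _
    show M.Cof (initial.to Z)
    rw [← hCof, ← h2]; exact h1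
  have hiM : M.Cof i := by rw [← hCof]; exact hi
  have hqW : M.W q := aux_anFib_w P M hCof q hq hZ
  haveI := hrlp i hiM hX hZ
  have sq : CommSq (𝟙 X) i p q := ⟨by simp [hfac]⟩
  exact M.W_retract p q
    ⟨i, sq.lift, 𝟙 Y, 𝟙 Y, sq.fac_left, by simp, by simp [hfac], by simp [sq.fac_right]⟩ hqW

/-- Any map with RLP against core cofibrations is a weak equivalence. -/
lemma aux_rlp_w (P : Premodel C) (M : FresseLeft C) (hCof : P.Cof = M.Cof)
    {X Y : C} (p : X ⟶ Y)
    (hrlp : ∀ {A B : C} (g : A ⟶ B), M.Cof g → M.Cofibrant A → M.Cofibrant B →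
      HasLiftingProperty g p) : M.W p := by
  obtain ⟨Z, r, hZcof, hrFib, hrW⟩ := aux_cof_replacement M X
  have hcomp : M.W (r ≫ p) := by
    refine aux_rlp_w_of_cofibrant P M hCof (r ≫ p) hZcof ?_
    intro A B g hg hA hB
    haveI := M.lift_cof_trivFib g r hg hA hrFib hrW
    haveI := hrlp g hg hA hB
    infer_instance
  exact M.W_cancel_right r p hrW hcomp

/-- An anodyne cofibration with cofibrant domain is a weak equivalence. -/
lemma aux_anCof_w (P : Premodel C) (M : FresseLeft C) (hFib : P.Fib = M.Fib)
    {X Z : C} (a : X ⟶ Z) (ha : P.AnCof a) (hX : M.Cofibrant X) : M.W a := by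
  obtain ⟨T, k, r, hk, hwk, hr, hfac⟩ := M.fact_trivCof_fib a hX
  haveI : HasLiftingProperty a r := P.anCof_llp a r ha (by rw [hFib]; exact hr)
  have sq : CommSq k a r (𝟙 Z) := ⟨by simp [hfac]⟩
  exact M.W_retract a k
    ⟨𝟙 X, 𝟙 X, sq.lift, r, by simp, sq.fac_right, by simp [sq.fac_left], by simp [hfac]⟩ hwk

/-- A map with cofibrant domain and fibrant codomain having LLP against fibrations
between fibrant objects is a weak equivalence. -/
lemma aux_llp_w_of_fibrant (P : Premodel C) (M : FresseLeft C) (hFib : P.Fib = M.Fib)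
    {X V : C} (i : X ⟶ V) (hX : M.Cofibrant X) (hV : M.Fibrant V)
    (hllp : ∀ {A B : C} (g : A ⟶ B), M.Fib g → M.Fibrant A → M.Fibrant B →
      HasLiftingProperty i g) : M.W i := by
  obtain ⟨Z, a, q, ha, hq, hfac⟩ := P.fact_anCof_fib i
  have haW : M.W a := aux_anCof_w P M hFib a ha hX
  have hZ : M.Fibrant Z := by
    have h1 : P.Fib (q ≫ terminal.from V) :=
      aux_fib_comp P hq (by show P.Fib (terminal.from V); rw [hFib]; exact hV)
    have h2 : q ≫ terminal.from V = terminal.from Z := Subsingleton.elim _ _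
    show M.Fib (terminal.from Z)
    rw [← hFib, ← h2]; exact h1
  haveI := hllp q (by rw [← hFib]; exact hq) hZ hV
  have sq : CommSq a i q (𝟙 V) := ⟨by simp [hfac]⟩
  exact M.W_retract i a
    ⟨𝟙 X, 𝟙 X, sq.lift, q, by simp, sq.fac_right, by simp [sq.fac_left], by simp [hfac]⟩ haW

/-- A map between cofibrant objects with LLP against fibrations between fibrant objects
is a weak equivalence. -/
lemma aux_llp_w (P : Premodel C) (M : FresseLeft C) (hFib : P.Fib = M.Fib)
    {X Y : C} (i : X ⟶ Y) (hX : M.Cofibrant X) (hY : M.Cofibrant Y)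
    (hllp : ∀ {A B : C} (g : A ⟶ B), M.Fib g → M.Fibrant A → M.Fibrant B →
      HasLiftingProperty i g) : M.W i := by
  obtain ⟨RY, j, pR, hj, hjW, hpR, hfac⟩ := M.fact_trivCof_fib (terminal.from Y) hY
  have hRY : M.Fibrant RY := by
    have h : pR = terminal.from RY := Subsingleton.elim _ _
    show M.Fib (terminal.from RY)
    rw [← h]; exact hpR
  have hcomp : M.W (i ≫ j) := by
    refine aux_llp_w_of_fibrant P M hFib (i ≫ j) hX hRY ?_
    intro A B g hg hA hB
    haveI := hllp g hg hA hB
    haveI := M.lift_trivCof_fib j g hj hY hjW hg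
    infer_instance
  exact M.W_cancel_left i j hjW hcomp

end Aux

/-- If a premodel category carries a Fresse left semi-model structure with the same
cofibrations and fibrations, then a fibration is acyclic iff it is a weak equivalence,
a core cofibration is acyclic iff it is a weak equivalence, and every trivial core
cofibration is an anodyne cofibration. -/
theorem premodel_fresse_acyclic_match [HasLimits C] [HasColimits C]
    (P : Premodel C) (M : FresseLeft C)
    (hCof : P.Cof = M.Cof) (hFib : P.Fib = M.Fib) :
    (∀ {X Y : C} (f : X ⟶ Y), P.Fib f → (P.AcyclicFib f ↔ M.W f)) ∧
      (∀ {X Y : C} (i : X ⟶ Y), P.Cof i → P.Cofibrant X → (P.AcyclicCof i ↔ M.W i)) ∧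
      (∀ {X Y : C} (i : X ⟶ Y), P.Cof i → P.Cofibrant X → M.W i → P.AnCof i) := by
  refine ⟨?_, ?_, ?_⟩
  · -- acyclic fibrations = trivial fibrations
    intro X Y f hf
    constructor
    · rintro ⟨-, hlift⟩
      refine aux_rlp_w P M hCof f ?_
      intro A B g hg hA hB
      exact hlift g (by rw [hCof]; exact hg)
        (show P.Cof (initial.to A) by rw [hCof]; exact hA)
        (show P.Cof (initial.to B) by rw [hCof]; exact hB)
    · intro hw
      refine ⟨hf, ?_⟩
      intro A B g hg hA hB
      exact M.lift_cof_trivFib g f (by rw [← hCof]; exact hg)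
        (by rw [← hCof]; exact (hA : P.Cof (initial.to A)))
        (by rw [← hFib]; exact hf) hw
  · -- acyclic core cofibrations = trivial core cofibrations
    intro X Y i hi hX
    have hXM : M.Cof (initial.to X) := by rw [← hCof]; exact (hX : P.Cof (initial.to X))
    have hYM : M.Cof (initial.to Y) := by
      have h1 : P.Cof (initial.to X ≫ i) := aux_cof_comp P hX hi
      have h2 : initial.to X ≫ i = initial.to Y := Subsingleton.elim _ _
      rw [← hCof, ← h2]; exact h1
    constructor
    · rintro ⟨-, hlift⟩
      refine aux_llp_w P M hFib i hXM hYM ?_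
      intro A B g hg hA hB
      exact hlift g (by rw [hFib]; exact hg)
        (show P.Fib (terminal.from A) by rw [hFib]; exact hA)
        (show P.Fib (terminal.from B) by rw [hFib]; exact hB)
    · intro hw
      refine ⟨hi, ?_⟩
      intro A B g hg _ _
      exact M.lift_trivCof_fib i g (by rw [← hCof]; exact hi) hXM hw
        (by rw [← hFib]; exact hg)
  · -- trivial core cofibrations are anodyne
    intro X Y i hi hX hw
    refine P.anCof_of_llp i ?_
    intro A B g hg
    exact M.lift_trivCof_fib i g (by rw [← hCof]; exact hi)
      (by rw [← hCof]; exact (hX : P.Cof (initial.to X))) hw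
      (by rw [← hFib]; exact hg)
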